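/- Let A ∈ ℂ^{n×n}, let P^s be an n×n complex Hermitian positive definite matrix, let Ψ_i, Ψ_j be 2×2 complex Hermitian matrices, and let Q_i, Q_j be n×n complex Hermitian positive definite matrices, and suppose the n×n Hermitian matrix [A; I]* (Φ ⊗ P^s + Ψ_i ⊗ Q_i − Ψ_j ⊗ Q_j) [A; I] is negative definite, where [A; I] denotes the 2n×n block matrix stacking A over I_n. Let a < b and let x : (a, b) → ℂⁿ be differentiable with x'(t) = A x(t) and x(t) ≠ 0 for all t ∈ (a, b), and suppose q_{Ψ_j,Q_j}(x'(t), x(t)) ≤ q_{Ψ_i,Q_i}(x'(t), x(t)) for all t ∈ (a, b). Then the Lyapunov function t ↦ x(t)*P^s x(t) is strictly decreasing on (a, b): for all a < s < t < b, x(t)*P^s x(t) < x(s)*P^s x(s). -/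

import Mathlib

open Matrix Complex MeasureTheory
open scoped ComplexOrder

/-- The frequency-weighted quadratic form `q_{Ψ,Q}(u, v) = (u,v)* (Ψ ⊗ Q) (u,v)`. -/
noncomputable def qForm {n : ℕ} (Ψ : Matrix (Fin 2) (Fin 2) ℂ)
    (Q : Matrix (Fin n) (Fin n) ℂ) (u v : Fin n → ℂ) : ℂ :=
  Ψ 0 0 * (star u ⬝ᵥ Q.mulVec u) + Ψ 0 1 * (star u ⬝ᵥ Q.mulVec v)
    + Ψ 1 0 * (star v ⬝ᵥ Q.mulVec u) + Ψ 1 1 * (star v ⬝ᵥ Q.mulVec v)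

/-- The Kronecker product `Ψ ⊗ Q` of a 2×2 matrix with an n×n matrix, written
as a 2×2 block matrix. -/
noncomputable def kron2 {n : ℕ} (Ψ : Matrix (Fin 2) (Fin 2) ℂ)
    (Q : Matrix (Fin n) (Fin n) ℂ) : Matrix (Fin n ⊕ Fin n) (Fin n ⊕ Fin n) ℂ :=
  Matrix.fromBlocks (Ψ 0 0 • Q) (Ψ 0 1 • Q) (Ψ 1 0 • Q) (Ψ 1 1 • Q)

/-- `Φ = [[0, 1], [1, 0]]`. -/
noncomputable def PhiMat : Matrix (Fin 2) (Fin 2) ℂ := !![0, 1; 1, 0]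

/-- A complex matrix is negative definite if it is Hermitian and `v*Mv < 0` for
all `v ≠ 0`. -/
def NegDefinite {k : Type*} [Fintype k] (M : Matrix k k ℂ) : Prop :=
  M.IsHermitian ∧ ∀ v : k → ℂ, v ≠ 0 → (star v ⬝ᵥ M.mulVec v).re < 0

lemma qForm_kron {n : ℕ} (Ψ : Matrix (Fin 2) (Fin 2) ℂ) (Q : Matrix (Fin n) (Fin n) ℂ)
    (u v : Fin n → ℂ) :
    star (Sum.elim u v) ⬝ᵥ (kron2 Ψ Q).mulVec (Sum.elim u v) = qForm Ψ Q u v := by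
  simp only [kron2, qForm, Function.star_sumElim, Matrix.fromBlocks_mulVec,
    sumElim_dotProduct_sumElim, dotProduct_add, Matrix.smul_mulVec,
    dotProduct_smul, smul_eq_mul, Sum.elim_comp_inl, Sum.elim_comp_inr]
  ring

lemma hasDerivAt_quad {n : ℕ} (Ps : Matrix (Fin n) (Fin n) ℂ)
    (x : ℝ → Fin n → ℂ) (x' : Fin n → ℂ) (t : ℝ) (hx : HasDerivAt x x' t) :
    HasDerivAt (fun s => star (x s) ⬝ᵥ Ps.mulVec (x s))
      (star x' ⬝ᵥ Ps.mulVec (x t) + star (x t) ⬝ᵥ Ps.mulVec x') t := by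
  have h1 : ∀ k, HasDerivAt (fun s => x s k) (x' k) t := hasDerivAt_pi.mp hx
  have h2 : ∀ k, HasDerivAt (fun s => (Ps.mulVec (x s)) k) ((Ps.mulVec x') k) t := by
    intro k
    simpa [Matrix.mulVec, dotProduct] using
      HasDerivAt.fun_sum (u := Finset.univ) (fun l _ => ((h1 l).const_mul (Ps k l)))
  have h3 : HasDerivAt (fun s => ∑ k, star (x s k) * (Ps.mulVec (x s)) k)
      (∑ k, (star (x' k) * (Ps.mulVec (x t)) k + star (x t k) * (Ps.mulVec x') k)) t :=
    HasDerivAt.fun_sum fun k _ => ((h1 k).star.mul (h2 k))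
  simpa [dotProduct, Finset.sum_add_distrib, Pi.star_apply] using h3

/-- Strict decrease of the Lyapunov function `t ↦ x(t)*P^s x(t)` along a nonzero
trajectory of `x' = Ax` on which mode `i` is selected by the frequency-dependent
switching law, under the switched Lyapunov LMI. -/
theorem fdsc_lyapunov_strict_decrease {n : ℕ}
    (A : Matrix (Fin n) (Fin n) ℂ)
    (Ps : Matrix (Fin n) (Fin n) ℂ) (hPs : Ps.PosDef)
    (Ψi Ψj : Matrix (Fin 2) (Fin 2) ℂ) (hΨi : Ψi.IsHermitian) (hΨj : Ψj.IsHermitian)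
    (Qi Qj : Matrix (Fin n) (Fin n) ℂ) (hQi : Qi.PosDef) (hQj : Qj.PosDef)
    (hM : NegDefinite
      ((Matrix.fromRows A (1 : Matrix (Fin n) (Fin n) ℂ))ᴴ
          * (kron2 PhiMat Ps + kron2 Ψi Qi - kron2 Ψj Qj)
          * Matrix.fromRows A (1 : Matrix (Fin n) (Fin n) ℂ)))
    (a b : ℝ) (hab : a < b)
    (x : ℝ → Fin n → ℂ)
    (hderiv : ∀ t ∈ Set.Ioo a b, HasDerivAt x (A.mulVec (x t)) t)
    (hx0 : ∀ t ∈ Set.Ioo a b, x t ≠ 0)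
    (hsw : ∀ t ∈ Set.Ioo a b,
      (qForm Ψj Qj (A.mulVec (x t)) (x t)).re ≤ (qForm Ψi Qi (A.mulVec (x t)) (x t)).re) :
    ∀ s ∈ Set.Ioo a b, ∀ t ∈ Set.Ioo a b, s < t →
      (star (x t) ⬝ᵥ Ps.mulVec (x t)).re < (star (x s) ⬝ᵥ Ps.mulVec (x s)).re := by
  obtain ⟨hMh, hMneg⟩ := hM
  set B := Matrix.fromRows A (1 : Matrix (Fin n) (Fin n) ℂ) with hB
  set K := kron2 PhiMat Ps + kron2 Ψi Qi - kron2 Ψj Qj with hK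
  -- the derivative of the Lyapunov function is negative on (a,b)
  have key : ∀ t ∈ Set.Ioo a b,
      (star (A.mulVec (x t)) ⬝ᵥ Ps.mulVec (x t)
        + star (x t) ⬝ᵥ Ps.mulVec (A.mulVec (x t))).re < 0 := by
    intro t ht
    set u := x t with hu
    set u' := A.mulVec u with hu'
    have hv := hMneg u (hx0 t ht)
    have hBu : B.mulVec u = Sum.elim u' u := by
      rw [hB, Matrix.fromRows_mulVec, Matrix.one_mulVec]
    have hrw : star u ⬝ᵥ (Bᴴ * K * B).mulVec u
        = star (Sum.elim u' u) ⬝ᵥ K.mulVec (Sum.elim u' u) := by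
      rw [← Matrix.mulVec_mulVec, ← Matrix.mulVec_mulVec, Matrix.dotProduct_mulVec (star u) Bᴴ,
        ← Matrix.star_mulVec, hBu]
    have hKval : star (Sum.elim u' u) ⬝ᵥ K.mulVec (Sum.elim u' u)
        = qForm PhiMat Ps u' u + qForm Ψi Qi u' u - qForm Ψj Qj u' u := by
      rw [hK, Matrix.sub_mulVec, Matrix.add_mulVec, dotProduct_sub, dotProduct_add,
        qForm_kron, qForm_kron, qForm_kron]
    have hPhi : qForm PhiMat Ps u' u
        = star u' ⬝ᵥ Ps.mulVec u + star u ⬝ᵥ Ps.mulVec u' := by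
      simp [qForm, PhiMat]
    rw [hrw, hKval, hPhi] at hv
    have hsw' := hsw t ht
    simp only [Complex.add_re, Complex.sub_re] at hv
    rw [← hu, ← hu'] at *
    rw [Complex.add_re]
    linarith
  -- strict antitonicity via the mean value theorem
  have hanti : StrictAntiOn (fun t => (star (x t) ⬝ᵥ Ps.mulVec (x t)).re) (Set.Ioo a b) := by
    apply strictAntiOn_of_deriv_neg (convex_Ioo a b)
    · intro t ht
      exact (Complex.continuous_re.continuousAt.comp
        (hasDerivAt_quad Ps x _ t (hderiv t ht)).continuousAt).continuousWithinAt
    · intro t ht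
      rw [interior_Ioo] at ht
      have hd : HasDerivAt (fun s => (star (x s) ⬝ᵥ Ps.mulVec (x s)).re)
          ((star (A.mulVec (x t)) ⬝ᵥ Ps.mulVec (x t)
            + star (x t) ⬝ᵥ Ps.mulVec (A.mulVec (x t))).re) t := by
        have := (hasDerivAt_quad Ps x (A.mulVec (x t)) t (hderiv t ht))
        exact (Complex.reCLM.hasFDerivAt.comp_hasDerivAt t this)
      rw [hd.deriv]
      exact key t ht
  intro s hs t ht hst
  exact hanti hs ht hst
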